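/- With S, a, L_z as above, fix k ≥ 0 and b ∈ S with b - k•a ∈ S. Define χ : L_{k•a} → L_b by letting χ(x) be the unique element of {x + m•a : m ∈ ℕ} ∩ L_b. Then χ is a bijection from L_{k•a} onto L_b. -/

import Mathlib

/-!
Every element of `L_b` lies on a ray `x + ℕ•a` through a unique point `x` of `L_{k•a}`:
subtract `a` from `y ∈ L_b` until one more subtraction would leave `S + k•a`. This stops
because `a`, the sum of the generators, dominates every element of `S`, so a ray `t - ℕ•a`
staying in `S` would force `S = S - S`, the whole group. Two points of the same `L_z` never
differ by a positive multiple of `a`, which gives both injectivity and the uniqueness of the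
landing point.
-/

namespace AddSubmonoid

variable {G : Type*} [AddCommGroup G] (S : AddSubmonoid G) (a : G)

/-- The set `L_z` of the paper. -/
def layer (z : G) : Set G :=
  ((fun s => s + z) '' (S : Set G) \ (fun s => s + z + a) '' (S : Set G)) ∩ (S : Set G)

variable {S a}

theorem mem_layer_iff {z x : G} : x ∈ S.layer a z ↔ x - z ∈ S ∧ x - z - a ∉ S ∧ x ∈ S := by
  simp only [layer, Set.mem_inter_iff, Set.mem_sdiff, Set.mem_image, SetLike.mem_coe]
  constructor
  · rintro ⟨⟨⟨s, hs, rfl⟩, hnot⟩, hx⟩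
    refine ⟨by simpa using hs, fun hc => hnot ⟨s + z - z - a, hc, by abel⟩, hx⟩
  · rintro ⟨hxz, hxza, hx⟩
    refine ⟨⟨⟨x - z, hxz, by abel⟩, ?_⟩, hx⟩
    rintro ⟨s, hs, rfl⟩
    exact hxza (by rwa [show s + z + a - z - a = s by abel])

theorem eq_of_add_nsmul_eq_add_nsmul (ha : a ∈ S) {z x y : G} (hx : x ∈ S.layer a z)
    (hy : y ∈ S.layer a z) {m n : ℕ} (h : x + m • a = y + n • a) : m = n := by
  wlog hmn : m ≤ n generalizing x y m n
  · exact (this hy hx h.symm (by omega)).symm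
  obtain ⟨j, rfl⟩ := Nat.exists_eq_add_of_le hmn
  rcases j with _ | j
  · rfl
  have hxy : x - z - a = y - z + j • a := by
    rw [eq_sub_of_add_eq h, add_nsmul, succ_nsmul]
    abel
  exact absurd (hxy ▸ S.add_mem (mem_layer_iff.1 hy).1 (S.nsmul_mem ha j)) (mem_layer_iff.1 hx).2.1

theorem exists_sub_nsmul_notMem (hgrp : ∀ x : G, ∃ s ∈ S, ∃ t ∈ S, x = s - t)
    (hne : (S : Set G) ≠ Set.univ) (hdom : ∀ s ∈ S, ∃ m : ℕ, m • a - s ∈ S) (t : G) :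
    ∃ n : ℕ, t - n • a ∉ S := by
  by_contra! hray
  refine hne (Set.eq_univ_of_forall fun u => ?_)
  obtain ⟨s, hs, s', hs', hu⟩ := hgrp (u - t)
  obtain ⟨m, hm⟩ := hdom s' hs'
  have hu' : u = s + (m • a - s') + (t - m • a) := by
    rw [eq_add_of_sub_eq hu.symm]
    abel
  exact hu' ▸ S.add_mem (S.add_mem hs hm) (hray m)

theorem exists_sub_nsmul_mem_and_sub_succ_nsmul_notMem (hexit : ∀ t : G, ∃ n : ℕ, t - n • a ∉ S)
    {t : G} (ht : t ∈ S) : ∃ n : ℕ, t - n • a ∈ S ∧ t - (n + 1) • a ∉ S := by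
  by_contra! hstep
  obtain ⟨n, hn⟩ := hexit t
  exact hn (Nat.rec (by simpa using ht) hstep n)

theorem bijOn_layer (ha : a ∈ S) (hexit : ∀ t : G, ∃ n : ℕ, t - n • a ∉ S) {k : ℕ} {b : G}
    (hbk : b - k • a ∈ S) {χ : G → G}
    (hχ : ∀ x ∈ S.layer a (k • a), (∃ m : ℕ, χ x = x + m • a) ∧ χ x ∈ S.layer a b) :
    Set.BijOn χ (S.layer a (k • a)) (S.layer a b) := by
  refine ⟨fun x hx => (hχ x hx).2, fun x₁ h₁ x₂ h₂ heq => ?_, fun y hy => ?_⟩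
  · obtain ⟨⟨m₁, hm₁⟩, -⟩ := hχ x₁ h₁
    obtain ⟨⟨m₂, hm₂⟩, -⟩ := hχ x₂ h₂
    have hsum : x₁ + m₁ • a = x₂ + m₂ • a := by rw [← hm₁, ← hm₂, heq]
    rw [eq_of_add_nsmul_eq_add_nsmul ha h₁ h₂ hsum] at hsum
    exact add_right_cancel hsum
  · obtain ⟨hyb, -, -⟩ := mem_layer_iff.1 hy
    have hyk : y - k • a ∈ S := by simpa using S.add_mem hyb hbk
    obtain ⟨n, hn, hn1⟩ := exists_sub_nsmul_mem_and_sub_succ_nsmul_notMem hexit hyk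
    have hxk : y - n • a - k • a ∈ S := by rwa [sub_right_comm]
    have hx : y - n • a ∈ S.layer a (k • a) := by
      refine mem_layer_iff.2 ⟨hxk, ?_, by simpa using S.add_mem hxk (S.nsmul_mem ha k)⟩
      convert hn1 using 2
      rw [succ_nsmul]
      abel
    refine ⟨y - n • a, hx, ?_⟩
    obtain ⟨⟨m, hm⟩, hχx⟩ := hχ _ hx
    have hmn : n = m := by
      refine eq_of_add_nsmul_eq_add_nsmul ha (hm ▸ hχx) (show y - n • a + n • a ∈ _ by simpa) ?_
      abel
    rw [hm, ← hmn, sub_add_cancel]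

end AddSubmonoid

theorem AddSubmonoid.exists_nsmul_sum_sub_mem_closure {G ι : Type*} [AddCommGroup G] [Fintype ι]
    (e : ι → G) {s : G} (hs : s ∈ closure (Set.range e)) :
    ∃ m : ℕ, m • ∑ i, e i - s ∈ closure (Set.range e) := by
  classical
  induction hs using closure_induction with
  | mem x hx =>
    obtain ⟨i, rfl⟩ := hx
    refine ⟨1, ?_⟩
    rw [one_smul, ← Finset.add_sum_erase _ _ (Finset.mem_univ i), add_sub_cancel_left]
    exact _root_.sum_mem fun j _ => subset_closure (Set.mem_range_self j)
  | zero => exact ⟨0, by simp⟩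
  | add x y _ _ ihx ihy =>
    obtain ⟨m₁, hm₁⟩ := ihx
    obtain ⟨m₂, hm₂⟩ := ihy
    refine ⟨m₁ + m₂, ?_⟩
    convert AddSubmonoid.add_mem _ hm₁ hm₂ using 1
    rw [add_nsmul]
    abel

theorem stmt_9_general (d r : ℕ) (S : AddSubmonoid (Fin d → ℤ)) (e : Fin r → (Fin d → ℤ))
    (hgen : S = AddSubmonoid.closure (Set.range e))
    (hgrp : ∀ x : Fin d → ℤ, ∃ s ∈ S, ∃ t ∈ S, x = s - t)
    (hne : (S : Set (Fin d → ℤ)) ≠ Set.univ)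
    (a : Fin d → ℤ) (ha : a = ∑ i, e i)
    (Lz : (Fin d → ℤ) → Set (Fin d → ℤ))
    (hLz : ∀ z : Fin d → ℤ, Lz z =
      ((fun s => s + z) '' (S : Set (Fin d → ℤ)) \
        (fun s => s + z + a) '' (S : Set (Fin d → ℤ))) ∩ (S : Set (Fin d → ℤ)))
    (k : ℕ) (b : Fin d → ℤ) (hbk : b - k • a ∈ S)
    (χ : (Fin d → ℤ) → (Fin d → ℤ))
    (hχ : ∀ x ∈ Lz (k • a), (∃ m : ℕ, χ x = x + m • a) ∧ χ x ∈ Lz b) :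
    Set.BijOn χ (Lz (k • a)) (Lz b) := by
  obtain rfl : Lz = S.layer a := funext hLz
  subst hgen ha
  have haS : ∑ i, e i ∈ AddSubmonoid.closure (Set.range e) :=
    sum_mem fun i _ => AddSubmonoid.subset_closure ⟨i, rfl⟩
  exact AddSubmonoid.bijOn_layer haS (AddSubmonoid.exists_sub_nsmul_notMem hgrp hne
    fun _ => AddSubmonoid.exists_nsmul_sum_sub_mem_closure e) hbk hχ

theorem stmt_9 (d r : ℕ) (S : AddSubmonoid (Fin d → ℤ)) (e : Fin r → (Fin d → ℤ))
    (hgen : S = AddSubmonoid.closure (Set.range e))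
    (hgrp : ∀ x : Fin d → ℤ, ∃ s ∈ S, ∃ t ∈ S, x = s - t)
    (hne : (S : Set (Fin d → ℤ)) ≠ Set.univ)
    (a : Fin d → ℤ) (ha : a = ∑ i, e i)
    (Lz : (Fin d → ℤ) → Set (Fin d → ℤ))
    (hLz : ∀ z : Fin d → ℤ, Lz z =
      ((fun s => s + z) '' (S : Set (Fin d → ℤ)) \
        (fun s => s + z + a) '' (S : Set (Fin d → ℤ))) ∩ (S : Set (Fin d → ℤ)))
    (k : ℕ) (b : Fin d → ℤ) (hb : b ∈ S) (hbk : b - k • a ∈ S)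
    (χ : (Fin d → ℤ) → (Fin d → ℤ))
    (hχ : ∀ x ∈ Lz (k • a), (∃ m : ℕ, χ x = x + m • a) ∧ χ x ∈ Lz b) :
    Set.BijOn χ (Lz (k • a)) (Lz b) :=
  stmt_9_general d r S e hgen hgrp hne a ha Lz hLz k b hbk χ hχ
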